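/- arXiv:2503.22522 — 2 statements merged into one kernel-verified Lean document; each statement's English description precedes it below -/
import Mathlib

section
/- A moving robot performing ribbon-following at distance d = 2r/(sqrt(3)-1) from the nearest robot of the parent ribbon does not collide with any other robot: the minimum distance from any point of the circular arc of radius d joining two adjacent ribbon vertices (centered at a parent-ribbon vertex) to any other lattice point occupied by a robot is at least 2r. -/
/-- Sixth root of unity direction: the triangular-lattice basis rotation. -/
noncomputable def w6 : ℂ := Complex.exp ((Real.pi : ℂ) / 3 * Complex.I)

/-- The triangular (hexagonal) lattice with spacing `d`, as a set of points of the plane. -/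
noncomputable def lat (d : ℝ) : Set ℂ :=
  {z | ∃ a b : ℤ, z = (d : ℂ) * ((a : ℂ) + (b : ℂ) * w6)}

/-!
The arc point `z` is at distance `d` from `v` and, since the arc subtends only `π / 3`, at distance
at most `d` from `x` and from `y`. Lattice distances are `d √N` with `N = a² + ab + b²`, and `N`
is never `2` (it is `(a - b)²` mod `3`); so a lattice point within distance `< √3 d` of each of
`v`, `x`, `y` would be at distance exactly `d` from all three, giving four points of the plane at
pairwise equal distance, which is impossible. Hence some vertex `w` has `√3 d ≤ |p - w|`, and
`|p - z| ≥ √3 d - d = 2r`.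
-/

open Complex

lemma w6_eq_half_add_sqrt_three_div_two_mul_I : w6 = 1 / 2 + (√3 / 2 : ℝ) * I := by
  rw [w6, show (Real.pi : ℂ) / 3 = (Real.pi / 3 : ℝ) by push_cast; ring, exp_mul_I,
    ← ofReal_cos, ← ofReal_sin, Real.cos_pi_div_three, Real.sin_pi_div_three]
  push_cast; ring

lemma normSq_intCast_add_intCast_mul_w6 (A B : ℤ) :
    normSq (A + B * w6) = A ^ 2 + A * B + B ^ 2 := by
  have h : (A : ℂ) + B * w6 = (A + B / 2 : ℝ) + (B * √3 / 2 : ℝ) * I := by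
    rw [w6_eq_half_add_sqrt_three_div_two_mul_I]; push_cast; ring
  rw [h, normSq_add_mul_I]
  linear_combination (B : ℝ) ^ 2 / 4 * Real.sq_sqrt (show (0 : ℝ) ≤ 3 by norm_num)

lemma Int.sq_add_mul_add_sq_ne_two (A B : ℤ) : A ^ 2 + A * B + B ^ 2 ≠ 2 := by
  intro h
  have h3 := congrArg (Int.cast : ℤ → ZMod 3) h
  push_cast at h3
  generalize (A : ZMod 3) = a at h3
  generalize (B : ZMod 3) = b at h3
  revert a b; decide

lemma exists_sub_eq_of_mem_lat {d : ℝ} {p q : ℂ} (hp : p ∈ lat d) (hq : q ∈ lat d) :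
    ∃ A B : ℤ, p - q = d * (A + B * w6) := by
  obtain ⟨a, b, rfl⟩ := hp
  obtain ⟨a', b', rfl⟩ := hq
  exact ⟨a - a', b - b', by push_cast; ring⟩

lemma dist_eq_or_sqrt_three_mul_le_of_mem_lat {d : ℝ} (hd : 0 ≤ d) {p q : ℂ}
    (hp : p ∈ lat d) (hq : q ∈ lat d) (hpq : p ≠ q) :
    dist p q = d ∨ √3 * d ≤ dist p q := by
  obtain ⟨A, B, hAB⟩ := exists_sub_eq_of_mem_lat hp hq
  have hsq : dist p q ^ 2 = d ^ 2 * (A ^ 2 + A * B + B ^ 2 : ℤ) := by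
    rw [dist_eq, Complex.sq_norm, hAB, normSq_mul, normSq_ofReal,
      normSq_intCast_add_intCast_mul_w6]
    push_cast; ring
  have hpos : 0 < dist p q := dist_pos.mpr hpq
  have hN : A ^ 2 + A * B + B ^ 2 = 1 ∨ 3 ≤ A ^ 2 + A * B + B ^ 2 := by
    have hN2 := Int.sq_add_mul_add_sq_ne_two A B
    have hN0 : A ^ 2 + A * B + B ^ 2 ≠ 0 := by
      intro h0
      rw [h0, Int.cast_zero, mul_zero, sq_eq_zero_iff] at hsq
      exact hpos.ne' hsq
    have hN_nonneg : 0 ≤ A ^ 2 + A * B + B ^ 2 := by nlinarith [sq_nonneg (A + B)]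
    omega
  rcases hN with h1 | h3
  · left
    rw [h1, Int.cast_one, mul_one] at hsq
    exact (pow_left_inj₀ hpos.le hd two_ne_zero).mp hsq
  · right
    have h3' : (3 : ℝ) ≤ (A ^ 2 + A * B + B ^ 2 : ℤ) := by exact_mod_cast h3
    have hsq_le : (√3 * d) ^ 2 ≤ dist p q ^ 2 := by
      rw [mul_pow, Real.sq_sqrt (by norm_num), hsq]; nlinarith
    exact (pow_le_pow_iff_left₀ (by positivity) hpos.le two_ne_zero).mp hsq_le

lemma eq_zero_of_norm_eq_of_norm_sub_eq {a b c : ℂ} {s : ℝ}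
    (ha : ‖a‖ = s) (hb : ‖b‖ = s) (hc : ‖c‖ = s)
    (hab : ‖a - b‖ = s) (hac : ‖a - c‖ = s) (hbc : ‖b - c‖ = s) : s = 0 := by
  have norm_sq : ∀ u : ℂ, ‖u‖ = s → u.re ^ 2 + u.im ^ 2 = s ^ 2 := fun u hu => by
    rw [← hu, Complex.sq_norm, normSq_apply]; ring
  have inner_eq : ∀ u w : ℂ, ‖u‖ = s → ‖w‖ = s → ‖u - w‖ = s →
      u.re * w.re + u.im * w.im = s ^ 2 / 2 := fun u w hu hw huw => by
    have := norm_sq _ huw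
    simp only [sub_re, sub_im] at this
    linear_combination (norm_sq u hu + norm_sq w hw - this) / 2
  have Na := norm_sq a ha
  have Nb := norm_sq b hb
  have Nc := norm_sq c hc
  have Gab := inner_eq a b ha hb hab
  have Gac := inner_eq a c ha hc hac
  have Gbc := inner_eq b c hb hc hbc
  -- Cramer's rule `D • c = X • a + Y • b` in the plane, dotted with `a`, `b` and `c`
  set D := a.re * b.im - a.im * b.re
  set X := c.re * b.im - c.im * b.re
  set Y := a.re * c.im - a.im * c.re
  have hD : 2 * D * s ^ 2 = 0 := by
    linear_combination (-3 * D) * Nc + (3 * X + D) * Gac + (3 * Y + D) * Gbc - X * Na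
      - (X + Y) * Gab - Y * Nb
  have hD2 : D ^ 2 = 3 * s ^ 4 / 4 := by
    linear_combination (b.re ^ 2 + b.im ^ 2) * Na + s ^ 2 * Nb
      - (a.re * b.re + a.im * b.im + s ^ 2 / 2) * Gab
  have hs6 : s ^ 6 = 0 := by linear_combination (2 / 3 * D) * hD - 4 / 3 * s ^ 2 * hD2
  exact pow_eq_zero_iff (by norm_num) |>.mp hs6

lemma eq_zero_of_pairwise_dist_eq {p v x y : ℂ} {s : ℝ}
    (hvx : dist v x = s) (hvy : dist v y = s) (hxy : dist x y = s)
    (hpv : dist p v = s) (hpx : dist p x = s) (hpy : dist p y = s) : s = 0 := by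
  refine eq_zero_of_norm_eq_of_norm_sub_eq (a := x - v) (b := y - v) (c := p - v)
    ?_ ?_ ?_ ?_ ?_ ?_
  all_goals
    simp only [sub_sub_sub_cancel_right, ← dist_eq]
    first | assumption | rwa [dist_comm]

lemma exists_sqrt_three_mul_le_dist_of_mem_lat {d : ℝ} {v x y p : ℂ}
    (hv : v ∈ lat d) (hx : x ∈ lat d) (hy : y ∈ lat d) (hp : p ∈ lat d)
    (hvx : dist v x = d) (hvy : dist v y = d) (hxy : dist x y = d)
    (hpv : p ≠ v) (hpx : p ≠ x) (hpy : p ≠ y) :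
    √3 * d ≤ dist p v ∨ √3 * d ≤ dist p x ∨ √3 * d ≤ dist p y := by
  have hd : 0 ≤ d := hvx ▸ dist_nonneg
  by_contra! h
  obtain ⟨hfar_v, hfar_x, hfar_y⟩ := h
  have hd0 := eq_zero_of_pairwise_dist_eq hvx hvy hxy
    ((dist_eq_or_sqrt_three_mul_le_of_mem_lat hd hp hv hpv).resolve_right hfar_v.not_ge)
    ((dist_eq_or_sqrt_three_mul_le_of_mem_lat hd hp hx hpx).resolve_right hfar_x.not_ge)
    ((dist_eq_or_sqrt_three_mul_le_of_mem_lat hd hp hy hpy).resolve_right hfar_y.not_ge)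
  rw [hd0, mul_zero] at hfar_v
  exact (dist_nonneg.trans_lt hfar_v).false

lemma norm_exp_mul_I_sub_one_le {θ : ℝ} (hθ : |θ| ≤ Real.pi / 3) :
    ‖exp (θ * I) - 1‖ ≤ 1 := by
  rw [mul_comm, norm_exp_I_mul_ofReal_sub_one, norm_mul, Real.norm_eq_abs,
    Real.norm_eq_abs, abs_two, ← le_div_iff₀' two_pos, abs_le]
  have hπ := Real.pi_pos
  obtain ⟨hθ₁, hθ₂⟩ := abs_le.mp hθ
  constructor
  · calc -(1 / 2) = Real.sin (-(Real.pi / 6)) := by rw [Real.sin_neg, Real.sin_pi_div_six]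
      _ ≤ Real.sin (θ / 2) :=
          Real.sin_le_sin_of_le_of_le_pi_div_two (by linarith) (by linarith) (by linarith)
  · calc Real.sin (θ / 2) ≤ Real.sin (Real.pi / 6) :=
          Real.sin_le_sin_of_le_of_le_pi_div_two (by linarith) (by linarith) (by linarith)
      _ = 1 / 2 := Real.sin_pi_div_six

lemma dist_le_of_sub_eq_mul_exp {v x z : ℂ} {θ : ℝ} (hθ : |θ| ≤ Real.pi / 3)
    (hz : z - v = (x - v) * exp (θ * I)) : dist z x ≤ dist x v := by
  calc dist z x = ‖x - v‖ * ‖exp (θ * I) - 1‖ := by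
        rw [dist_eq, show z - x = (z - v) - (x - v) by ring, hz, ← mul_sub_one, norm_mul]
    _ ≤ ‖x - v‖ := mul_le_of_le_one_right (norm_nonneg _) (norm_exp_mul_I_sub_one_le hθ)
    _ = dist x v := (dist_eq x v).symm

theorem stmt12_general (r d : ℝ) (hd : d = 2 * r / (Real.sqrt 3 - 1))
    (v x y : ℂ) (hv : v ∈ lat d) (hx : x ∈ lat d) (hy : y ∈ lat d)
    (hvx : dist v x = d) (hvy : dist v y = d) (hxy : dist x y = d)
    (φ : ℝ) (hφ : |φ| = Real.pi / 3)
    (hrot : y - v = (x - v) * Complex.exp ((φ : ℂ) * Complex.I))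
    (p : ℂ) (hp : p ∈ lat d) (hpx : p ≠ x) (hpy : p ≠ y) (hpv : p ≠ v)
    (z : ℂ) (t : ℝ) (ht : t ∈ Set.Icc (0 : ℝ) 1)
    (hz : z - v = (x - v) * Complex.exp (((t * φ : ℝ) : ℂ) * Complex.I)) :
    2 * r ≤ dist p z := by
  have h2r : 2 * r = √3 * d - d := by
    have h1 : 1 < √3 := Real.lt_sqrt zero_le_one |>.mpr (by norm_num)
    rw [hd]; field_simp [(sub_pos.mpr h1).ne']
  obtain ⟨ht₀, ht₁⟩ := ht
  have hzv : dist z v = d := by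
    rw [dist_eq, hz, norm_mul, norm_exp_ofReal_mul_I, mul_one, ← dist_eq, dist_comm, hvx]
  have hzx : dist z x ≤ d := by
    refine (dist_le_of_sub_eq_mul_exp ?_ hz).trans_eq (dist_comm x v ▸ hvx)
    rw [abs_mul, hφ, abs_of_nonneg ht₀]; nlinarith [Real.pi_pos]
  have hzy : dist z y ≤ d := by
    refine (dist_le_of_sub_eq_mul_exp (θ := (t - 1) * φ) ?_ ?_).trans_eq (dist_comm y v ▸ hvy)
    · rw [abs_mul, hφ, abs_of_nonpos (by linarith)]; nlinarith [Real.pi_pos]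
    · rw [hz, hrot, mul_assoc, ← Complex.exp_add]; push_cast; ring_nf
  rcases exists_sqrt_three_mul_le_dist_of_mem_lat hv hx hy hp hvx hvy hxy hpv hpx hpy
    with h | h | h
  · linarith [dist_triangle p z v]
  · linarith [dist_triangle p z x]
  · linarith [dist_triangle p z y]

/-- A robot performing ribbon-following along the circular arc of
radius `d = 2r/(√3 - 1)` centered at a parent-ribbon vertex `v`, joining adjacent
ribbon vertices `x` and `y` (central angle `π/3`), keeps a distance of at least `2r`
from every other lattice point (hence from every other robot). -/
theorem stmt12 (r d : ℝ) (hr : 0 < r) (hd : d = 2 * r / (Real.sqrt 3 - 1))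
    (v x y : ℂ) (hv : v ∈ lat d) (hx : x ∈ lat d) (hy : y ∈ lat d)
    (hvx : dist v x = d) (hvy : dist v y = d) (hxy : dist x y = d)
    (φ : ℝ) (hφ : |φ| = Real.pi / 3)
    (hrot : y - v = (x - v) * Complex.exp ((φ : ℂ) * Complex.I))
    (p : ℂ) (hp : p ∈ lat d) (hpx : p ≠ x) (hpy : p ≠ y) (hpv : p ≠ v)
    (z : ℂ) (t : ℝ) (ht : t ∈ Set.Icc (0 : ℝ) 1)
    (hz : z - v = (x - v) * Complex.exp (((t * φ : ℝ) : ℂ) * Complex.I)) :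
    2 * r ≤ dist p z :=
  stmt12_general r d hd v x y hv hx hy hvx hvy hxy φ hφ hrot p hp hpx hpy hpv z t ht hz
end

section
/- In the subtractive stage defined by the reactivation and reassembly sequences, for each ribbon R exactly c(R) robots (the recycled robots) are sent to the idle half-plane and exactly len(R) - c(R) robots (the rearranged robots) stop on vertices of R lying in S \ D; moreover for a rearranged robot starting at s and stopping at t, all vertices of R strictly between s and t (in the ribbon order, with t included) are unoccupied at its activation time. -/
/-!
The list of reassembly targets is the concatenation, over the ribbons in the complete tree
order, of the vertices of each ribbon lying in `S \ D`, and `rearrIdx` is exactly the offset of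
the `(j - c(R))`-th entry of ribbon `R`'s block in that concatenation. So the `j`-th rearranged
robot of `R` stops on the `(j - c(R))`-th vertex of `R` in `S \ D`. As `H₂` misses `S ⊇ R`, a
robot of `R` goes to `H₂` exactly when it is one of the first `c(R)`, which gives both counts.
A robot activated earlier than the `j`-th one of `R` was recycled into `H₂`, or stopped on an
earlier ribbon (ribbons are disjoint), or stopped on an earlier `S \ D`-vertex of `R`, which
precedes the current target in the ribbon order.
-/

/-- All ribbon vertices flattened in the complete tree order (largest ribbon first),
each ribbon listed in increasing ribbon order. -/
def flatR {M : ℕ} (ribbons : Fin M → List ℂ) : List ℂ := (List.ofFn ribbons).flatten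

/-- `c(R)`: the number of vertices of the ribbon `R` lying in the hole set `D`. -/
def cR (D : Set ℂ) [DecidablePred (· ∈ D)] (R : List ℂ) : ℕ :=
  (R.filter (fun x => decide (x ∈ D))).length

/-- Activation index of the first vertex of ribbon `i`. -/
def startIdx {M : ℕ} (ribbons : Fin M → List ℂ) (i : Fin M) : ℕ :=
  ∑ i' : Fin M, if i' < i then (ribbons i').length else 0

/-- The rearrangement targets: all vertices in `S \ D`, enumerated ribbon by ribbon in
the complete tree order (largest first), each ribbon in increasing ribbon order. -/
def rearrTargets {M : ℕ} (ribbons : Fin M → List ℂ) (S D : Set ℂ)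
    [DecidablePred (· ∈ S)] [DecidablePred (· ∈ D)] : List ℂ :=
  (flatR ribbons).filter (fun x => decide (x ∈ S) && !(decide (x ∈ D)))

/-- The index, among rearranged robots, of the robot activated at position `j` of
ribbon `i` (assuming `cR D (ribbons i) ≤ j`). -/
def rearrIdx {M : ℕ} (ribbons : Fin M → List ℂ) (D : Set ℂ) [DecidablePred (· ∈ D)]
    (i : Fin M) (j : ℕ) : ℕ :=
  (∑ i' : Fin M, if i' < i then (ribbons i').length - cR D (ribbons i') else 0) +
    (j - cR D (ribbons i))

theorem List.length_filter_range_lt (c n : ℕ) :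
    ((List.range n).filter (· < c)).length = min c n := by
  induction n with
  | zero => simp
  | succ n ih =>
    rw [List.range_succ, List.filter_append, List.length_append, ih]
    grind

theorem List.length_filter_range_ge (c n : ℕ) :
    ((List.range n).filter (c ≤ ·)).length = n - c := by
  have := (List.range n).length_eq_length_filter_add (· < c)
  simp only [List.length_range, List.length_filter_range_lt, ← decide_not, not_lt] at this
  omega

lemma List.Sublist.idxOf_getElem_lt {α : Type*} [DecidableEq α] {l l' : List α}
    (h : l'.Sublist l) (hl : l.Nodup) {a b : ℕ} (hab : a < b) (hb : b < l'.length) :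
    l.idxOf (l'[a]'(hab.trans hb)) < l.idxOf l'[b] := by
  have hsorted : l.Pairwise (fun x y => l.idxOf x < l.idxOf y) := by
    rw [List.pairwise_iff_getElem]
    intro x y hx hy hxy
    rwa [hl.idxOf_getElem, hl.idxOf_getElem]
  exact List.pairwise_iff_getElem.mp (hsorted.sublist h) a b _ hb hab

def prefixSum {M : ℕ} (f : Fin M → ℕ) (i : Fin M) : ℕ :=
  ∑ i' : Fin M, if i' < i then f i' else 0

@[simp]
lemma prefixSum_zero {M : ℕ} (f : Fin (M + 1) → ℕ) : prefixSum f 0 = 0 := by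
  simp [prefixSum]

lemma prefixSum_succ {M : ℕ} (f : Fin (M + 1) → ℕ) (i : Fin M) :
    prefixSum f i.succ = f 0 + prefixSum (fun i' => f i'.succ) i := by
  simp [prefixSum, Fin.sum_univ_succ, Fin.succ_pos]

lemma List.getD_flatten_ofFn {α : Type*} {M : ℕ} (f : Fin M → List α) (i : Fin M) {k : ℕ}
    (hk : k < (f i).length) (d : α) :
    (List.ofFn f).flatten.getD (prefixSum (fun i' => (f i').length) i + k) d = (f i).getD k d := by
  induction M with
  | zero => exact i.elim0
  | succ M ih =>
    rw [List.ofFn_succ, List.flatten_cons]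
    cases i using Fin.cases with
    | zero => simpa using List.getD_append _ _ _ _ hk
    | succ i =>
      rw [prefixSum_succ, Nat.add_assoc, List.getD_append_right _ _ _ _ (Nat.le_add_right _ _),
        Nat.add_sub_cancel_left]
      exact ih (fun i' => f i'.succ) i hk

lemma exists_eq_prefixSum_add_of_lt {M : ℕ} (f : Fin M → ℕ) (i : Fin M) {j m : ℕ}
    (hj : j ≤ f i) (hm : m < prefixSum f i + j) :
    ∃ u j', (u < i ∨ u = i ∧ j' < j) ∧ j' < f u ∧ m = prefixSum f u + j' := by
  induction M generalizing m with
  | zero => exact i.elim0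
  | succ M ih =>
    cases i using Fin.cases with
    | zero =>
      rw [prefixSum_zero, Nat.zero_add] at hm
      exact ⟨0, m, Or.inr ⟨rfl, hm⟩, by omega, by simp⟩
    | succ i =>
      by_cases hm0 : m < f 0
      · exact ⟨0, m, Or.inl (Fin.succ_pos i), hm0, by simp⟩
      · rw [prefixSum_succ] at hm
        obtain ⟨u, j', hu, hj', hm'⟩ :=
          ih (fun i' => f i'.succ) i (m := m - f 0) hj (by omega)
        refine ⟨u.succ, j', ?_, hj', by rw [prefixSum_succ]; omega⟩
        simpa [Fin.succ_lt_succ_iff] using hu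

section Schedule

variable {M : ℕ} (ribbons : Fin M → List ℂ) (S D : Set ℂ)
  [DecidablePred (· ∈ S)] [DecidablePred (· ∈ D)]

def rearrSlots (R : List ℂ) : List ℂ :=
  R.filter (fun x => decide (x ∈ S) && !(decide (x ∈ D)))

lemma rearrTargets_eq_flatten :
    rearrTargets ribbons S D = (List.ofFn fun i => rearrSlots S D (ribbons i)).flatten := by
  simp only [rearrTargets, flatR, List.filter_flatten, List.map_ofFn]
  rfl

variable {S D}

lemma length_rearrSlots {R : List ℂ} (hR : ∀ x ∈ R, x ∈ S) :
    (rearrSlots S D R).length = R.length - cR D R := by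
  have hslots : rearrSlots S D R = R.filter (fun x => !decide (x ∈ D)) :=
    List.filter_congr fun x hx => by simp [hR x hx]
  have hsplit := R.length_eq_length_filter_add (fun x => decide (x ∈ D))
  rw [hslots, cR]
  omega

lemma getD_rearrTargets_rearrIdx (hsub : ∀ i : Fin M, ∀ x ∈ ribbons i, x ∈ S) (i : Fin M)
    {j : ℕ} (hc : cR D (ribbons i) ≤ j) (hj : j < (ribbons i).length) :
    (rearrTargets ribbons S D).getD (rearrIdx ribbons D i j) 0 =
      (rearrSlots S D (ribbons i)).getD (j - cR D (ribbons i)) 0 := by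
  have hidx : rearrIdx ribbons D i j =
      prefixSum (fun i' => (rearrSlots S D (ribbons i')).length) i + (j - cR D (ribbons i)) := by
    simp only [rearrIdx, prefixSum, length_rearrSlots (hsub _)]
  rw [hidx, rearrTargets_eq_flatten, List.getD_flatten_ofFn]
  rw [length_rearrSlots (hsub i)]
  omega

end Schedule

structure IsSubtractiveSchedule {M : ℕ} (ribbons : Fin M → List ℂ) (S D H2 : Set ℂ)
    [DecidablePred (· ∈ S)] [DecidablePred (· ∈ D)] (tr : ℕ → ℂ) : Prop where
  recycle : ∀ i : Fin M, ∀ j : ℕ, j < cR D (ribbons i) → tr (startIdx ribbons i + j) ∈ H2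
  rearrange : ∀ i : Fin M, ∀ j : ℕ, cR D (ribbons i) ≤ j → j < (ribbons i).length →
    tr (startIdx ribbons i + j) = (rearrTargets ribbons S D).getD (rearrIdx ribbons D i j) 0

namespace IsSubtractiveSchedule

variable {M : ℕ} {ribbons : Fin M → List ℂ} {S D H2 : Set ℂ}
  [DecidablePred (· ∈ S)] [DecidablePred (· ∈ D)] {tr : ℕ → ℂ}

lemma target_eq_getD_rearrSlots (hs : IsSubtractiveSchedule ribbons S D H2 tr)
    (hsub : ∀ i : Fin M, ∀ x ∈ ribbons i, x ∈ S) {i : Fin M} {j : ℕ}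
    (hc : cR D (ribbons i) ≤ j) (hj : j < (ribbons i).length) :
    tr (startIdx ribbons i + j) = (rearrSlots S D (ribbons i)).getD (j - cR D (ribbons i)) 0 :=
  (hs.rearrange i j hc hj).trans (getD_rearrTargets_rearrIdx ribbons hsub i hc hj)

lemma target_mem_rearrSlots (hs : IsSubtractiveSchedule ribbons S D H2 tr)
    (hsub : ∀ i : Fin M, ∀ x ∈ ribbons i, x ∈ S) {i : Fin M} {j : ℕ}
    (hc : cR D (ribbons i) ≤ j) (hj : j < (ribbons i).length) :
    tr (startIdx ribbons i + j) ∈ rearrSlots S D (ribbons i) := by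
  rw [hs.target_eq_getD_rearrSlots hsub hc hj, List.getD_eq_getElem]
  · exact List.getElem_mem _
  · rw [length_rearrSlots (hsub i)]
    omega

lemma target_mem_H2_iff (hs : IsSubtractiveSchedule ribbons S D H2 tr)
    (hsub : ∀ i : Fin M, ∀ x ∈ ribbons i, x ∈ S) (hH2 : ∀ x ∈ S, x ∉ H2)
    {i : Fin M} {j : ℕ} (hj : j < (ribbons i).length) :
    tr (startIdx ribbons i + j) ∈ H2 ↔ j < cR D (ribbons i) := by
  refine ⟨fun hH => ?_, hs.recycle i j⟩
  by_contra! hc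
  have hmem := hs.target_mem_rearrSlots hsub hc hj
  exact hH2 _ (hsub i _ (List.mem_of_mem_filter hmem)) hH

lemma target_mem_rearrSlots_iff (hs : IsSubtractiveSchedule ribbons S D H2 tr)
    (hsub : ∀ i : Fin M, ∀ x ∈ ribbons i, x ∈ S) (hH2 : ∀ x ∈ S, x ∉ H2)
    {i : Fin M} {j : ℕ} (hj : j < (ribbons i).length) :
    tr (startIdx ribbons i + j) ∈ rearrSlots S D (ribbons i) ↔ cR D (ribbons i) ≤ j := by
  refine ⟨fun hmem => ?_, fun hc => hs.target_mem_rearrSlots hsub hc hj⟩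
  by_contra! hc
  exact hH2 _ (hsub i _ (List.mem_of_mem_filter hmem)) (hs.recycle i j hc)

lemma target_ne_of_lt_startIdx_add [DecidableEq ℂ]
    (hs : IsSubtractiveSchedule ribbons S D H2 tr) (hnodup : (flatR ribbons).Nodup)
    (hsub : ∀ i : Fin M, ∀ x ∈ ribbons i, x ∈ S)
    (hH2 : ∀ x ∈ S, x ∉ H2) {i : Fin M} {j : ℕ}
    (hc : cR D (ribbons i) ≤ j) (hj : j < (ribbons i).length) {p : ℕ}
    (hp : (ribbons i).idxOf (tr (startIdx ribbons i + j)) ≤ p) (hpj : p < j)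
    {m : ℕ} (hm : m < startIdx ribbons i + j) :
    tr m ≠ (ribbons i).getD p 0 := by
  have hpR : p < (ribbons i).length := hpj.trans hj
  rw [List.getD_eq_getElem _ _ hpR]
  obtain ⟨hnd, hdisj⟩ := List.nodup_flatten.mp hnodup
  obtain ⟨u, j', hlex, hj', rfl⟩ :=
    exists_eq_prefixSum_add_of_lt (fun i => (ribbons i).length) i hj.le hm
  change tr (startIdx ribbons u + j') ≠ _
  intro heq
  by_cases hrecycled : j' < cR D (ribbons u)
  · exact hH2 _ (hsub i _ (List.getElem_mem hpR)) (heq ▸ hs.recycle u j' hrecycled)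
  have hmem := hs.target_mem_rearrSlots hsub (not_lt.mp hrecycled) hj'
  rcases hlex with hlt | ⟨rfl, hjj⟩
  · exact List.pairwise_ofFn.mp hdisj hlt (List.mem_of_mem_filter hmem)
      (heq ▸ List.getElem_mem hpR)
  -- an earlier robot of the same ribbon took an earlier `S \ D`-vertex, so one before the target
  have hlen : j - cR D (ribbons u) < (rearrSlots S D (ribbons u)).length := by
    rw [length_rearrSlots (hsub u)]
    omega
  have hlen' : j' - cR D (ribbons u) < j - cR D (ribbons u) := by omega
  have hsub_u : (rearrSlots S D (ribbons u)).Sublist (ribbons u) := List.filter_sublist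
  have hearlier := hsub_u.idxOf_getElem_lt (hnd _ (List.mem_ofFn.mpr ⟨u, rfl⟩)) hlen' hlen
  rw [hs.target_eq_getD_rearrSlots hsub hc hj, List.getD_eq_getElem _ _ hlen] at hp
  rw [hs.target_eq_getD_rearrSlots hsub (not_lt.mp hrecycled) hj',
    List.getD_eq_getElem _ _ (hlen'.trans hlen)] at heq
  rw [heq, (hnd _ (List.mem_ofFn.mpr ⟨u, rfl⟩)).idxOf_getElem] at hearlier
  omega

end IsSubtractiveSchedule

/-- The schedule hypotheses encode the reactivation/reassembly rules: the robot at
activation index `startIdx i + j` is recycled (target in `H₂`) if `j < c(R_i)`,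
and otherwise is rearranged, its target being the next unassigned vertex of `S \ D`
in the complete tree order. -/
theorem stmt15_general [DecidableEq ℂ] {M : ℕ} (ribbons : Fin M → List ℂ)
    (S D H2 : Set ℂ)
    [DecidablePred (· ∈ S)] [DecidablePred (· ∈ D)] [DecidablePred (· ∈ H2)]
    (tr : ℕ → ℂ)
    (hnodup : (flatR ribbons).Nodup)
    (hsub : ∀ i : Fin M, ∀ x ∈ ribbons i, x ∈ S)
    (hH2 : ∀ x ∈ S, x ∉ H2)
    (h_recycle : ∀ i : Fin M, ∀ j : ℕ, j < cR D (ribbons i) →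
      tr (startIdx ribbons i + j) ∈ H2)
    (h_rearr : ∀ i : Fin M, ∀ j : ℕ, cR D (ribbons i) ≤ j → j < (ribbons i).length →
      tr (startIdx ribbons i + j) = (rearrTargets ribbons S D).getD (rearrIdx ribbons D i j) 0) :
    (∀ i : Fin M,
      ((List.range (ribbons i).length).filter
        (fun j => decide (tr (startIdx ribbons i + j) ∈ H2))).length = cR D (ribbons i)) ∧
    (∀ i : Fin M,
      ((List.range (ribbons i).length).filter
        (fun j => decide (tr (startIdx ribbons i + j) ∈ ribbons i) &&
          decide (tr (startIdx ribbons i + j) ∈ S) &&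
          !(decide (tr (startIdx ribbons i + j) ∈ D)))).length =
        (ribbons i).length - cR D (ribbons i)) ∧
    (∀ i : Fin M, ∀ j : ℕ, cR D (ribbons i) ≤ j → j < (ribbons i).length →
      ∀ p : ℕ, (ribbons i).idxOf (tr (startIdx ribbons i + j)) ≤ p → p < j →
        ∀ m < startIdx ribbons i + j, tr m ≠ (ribbons i).getD p 0) := by
  have hs : IsSubtractiveSchedule ribbons S D H2 tr := ⟨h_recycle, h_rearr⟩
  refine ⟨fun i => ?_, fun i => ?_, fun i j hc hj p hp hpj m hm =>
    hs.target_ne_of_lt_startIdx_add hnodup hsub hH2 hc hj hp hpj hm⟩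
  · have hcR : cR D (ribbons i) ≤ (ribbons i).length := List.length_filter_le _ _
    rw [List.filter_congr (q := (· < cR D (ribbons i))) fun j hj => by
      simp [hs.target_mem_H2_iff hsub hH2 (List.mem_range.mp hj)],
      List.length_filter_range_lt, min_eq_left hcR]
  · rw [List.filter_congr (q := (cR D (ribbons i) ≤ ·)) fun j hj => by
      rw [Bool.eq_iff_iff]
      simpa [rearrSlots, and_assoc] using
        hs.target_mem_rearrSlots_iff hsub hH2 (List.mem_range.mp hj),
      List.length_filter_range_ge]

/-- In the subtractive stage, for each ribbon `R` exactly `c(R)`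
robots (the recycled robots) are sent to the idle half-plane `H₂`, and exactly
`len(R) - c(R)` robots (the rearranged robots) stop on vertices of `R` lying in
`S \ D`; moreover, for a rearranged robot activated at position `j` with target `t`,
all vertices of `R` strictly between its start and `t` (in ribbon order, `t` included)
are unoccupied at its activation time (they are not the target of any earlier robot).

The schedule hypotheses encode the reactivation/reassembly rules: the robot at
activation index `startIdx i + j` is recycled (target in `H₂`) if `j < c(R_i)`,
and otherwise is rearranged, its target being the next unassigned vertex of `S \ D`
in the complete tree order. -/
theorem stmt15 [DecidableEq ℂ] {M : ℕ} (ribbons : Fin M → List ℂ)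
    (S D H2 : Set ℂ)
    [DecidablePred (· ∈ S)] [DecidablePred (· ∈ D)] [DecidablePred (· ∈ H2)]
    (tr : ℕ → ℂ)
    (hnodup : (flatR ribbons).Nodup)
    (hsub : ∀ i : Fin M, ∀ x ∈ ribbons i, x ∈ S)
    (hDS : D ⊆ S)
    (hH2 : ∀ x ∈ S, x ∉ H2)
    (h_recycle : ∀ i : Fin M, ∀ j : ℕ, j < cR D (ribbons i) →
      tr (startIdx ribbons i + j) ∈ H2)
    (h_rearr : ∀ i : Fin M, ∀ j : ℕ, cR D (ribbons i) ≤ j → j < (ribbons i).length →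
      tr (startIdx ribbons i + j) = (rearrTargets ribbons S D).getD (rearrIdx ribbons D i j) 0) :
    (∀ i : Fin M,
      ((List.range (ribbons i).length).filter
        (fun j => decide (tr (startIdx ribbons i + j) ∈ H2))).length = cR D (ribbons i)) ∧
    (∀ i : Fin M,
      ((List.range (ribbons i).length).filter
        (fun j => decide (tr (startIdx ribbons i + j) ∈ ribbons i) &&
          decide (tr (startIdx ribbons i + j) ∈ S) &&
          !(decide (tr (startIdx ribbons i + j) ∈ D)))).length =
        (ribbons i).length - cR D (ribbons i)) ∧
    (∀ i : Fin M, ∀ j : ℕ, cR D (ribbons i) ≤ j → j < (ribbons i).length →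
      ∀ p : ℕ, (ribbons i).idxOf (tr (startIdx ribbons i + j)) ≤ p → p < j →
        ∀ m < startIdx ribbons i + j, tr m ≠ (ribbons i).getD p 0) :=
  stmt15_general ribbons S D H2 tr hnodup hsub hH2 h_recycle h_rearr
end
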